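/- arXiv:1006.5388 — 3 statements merged into one kernel-verified Lean document; each statement's English description precedes it below -/
import Mathlib

section
/- Let G be a separable Banach space, E ⊂ G* closed, convex and bounded (endowed with a distance inducing the weak* topology), let (F, 𝓕, λ) be a measure space, and let {ν_z}_{z∈F} be a Borel family of probability measures on E. Then ν_z is a Dirac mass for λ-a.e. z ∈ F if and only if for every y ∈ G and every c ∈ ℝ one has ν_z({x ∈ E : ⟨x,y⟩ ≤ c}) · ν_z({x ∈ E : ⟨x,y⟩ > c}) = 0 for λ-a.e. z ∈ F. -/
open MeasureTheory

section Aux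

variable {G : Type*} [NormedAddCommGroup G] [NormedSpace ℝ G]
    [MeasurableSpace (WeakDual ℝ G)] [BorelSpace (WeakDual ℝ G)]
    {E : Set (WeakDual ℝ G)}

private lemma meas_eval (y : G) : Measurable fun x : E => (x : WeakDual ℝ G) y :=
  ((WeakDual.eval_continuous y).measurable).comp measurable_subtype_coe

private lemma exists_level (R : ℝ) (hEbdd : ∀ x ∈ E, ∀ y : G, |x y| ≤ R * ‖y‖)
    (μ : Measure E) [IsProbabilityMeasure μ] (y : G)
    (h : ∀ c : ℚ, μ {x : E | (x : WeakDual ℝ G) y ≤ (c : ℝ)} *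
        μ {x : E | (c : ℝ) < (x : WeakDual ℝ G) y} = 0) :
    ∃ r : ℝ, μ {x : E | (x : WeakDual ℝ G) y = r} = 1 := by
  set T : Set ℚ := {q : ℚ | μ {x : E | (x : WeakDual ℝ G) y ≤ (q : ℝ)} = 0} with hT
  have hbd : ∀ x : E, |(x : WeakDual ℝ G) y| ≤ R * ‖y‖ := fun x => hEbdd x x.2 y
  -- T is nonempty
  obtain ⟨q₀, hq₀⟩ := exists_rat_lt (-(R * ‖y‖))
  have hq₀T : q₀ ∈ T := by
    have : {x : E | (x : WeakDual ℝ G) y ≤ (q₀ : ℝ)} = ∅ := by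
      ext x
      simp only [Set.mem_setOf_eq, Set.mem_empty_iff_false, iff_false, not_le]
      exact lt_of_lt_of_le hq₀ (neg_le_of_abs_le (hbd x))
    simp [hT, this]
  -- Tr and its sup
  set Tr : Set ℝ := (fun q : ℚ => (q : ℝ)) '' T with hTr
  have hTrne : Tr.Nonempty := ⟨(q₀ : ℝ), ⟨q₀, hq₀T, rfl⟩⟩
  have hTrbdd : BddAbove Tr := by
    refine ⟨R * ‖y‖, ?_⟩
    rintro t ⟨q, hq, rfl⟩
    by_contra hgt
    push_neg at hgt
    have : {x : E | (x : WeakDual ℝ G) y ≤ (q : ℝ)} = Set.univ := by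
      ext x
      simp only [Set.mem_setOf_eq, Set.mem_univ, iff_true]
      exact le_trans (le_of_abs_le (hbd x)) hgt.le
    rw [hT] at hq
    simp only [Set.mem_setOf_eq, this, measure_univ] at hq
    exact one_ne_zero hq
  set r : ℝ := sSup Tr with hr
  have hlt : μ {x : E | (x : WeakDual ℝ G) y < r} = 0 := by
    have hsub : {x : E | (x : WeakDual ℝ G) y < r} ⊆
        ⋃ q ∈ T, {x : E | (x : WeakDual ℝ G) y ≤ (q : ℝ)} := by
      intro x hx
      obtain ⟨t, ⟨q, hq, rfl⟩, hlt⟩ := exists_lt_of_lt_csSup hTrne hx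
      exact Set.mem_biUnion hq hlt.le
    exact measure_mono_null hsub
      ((measure_biUnion_null_iff (Set.to_countable T)).2 fun q hq => hq)
  have hgt : μ {x : E | r < (x : WeakDual ℝ G) y} = 0 := by
    have hsub : {x : E | r < (x : WeakDual ℝ G) y} ⊆
        ⋃ q ∈ {q : ℚ | r < (q : ℝ)}, {x : E | (q : ℝ) < (x : WeakDual ℝ G) y} := by
      intro x hx
      simp only [Set.mem_setOf_eq] at hx
      obtain ⟨q, hq1, hq2⟩ := exists_rat_btwn hx
      exact Set.mem_biUnion hq1 hq2
    refine measure_mono_null hsub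
      ((measure_biUnion_null_iff (Set.to_countable _)).2 fun q hq => ?_)
    have hqT : q ∉ T := fun hmem => absurd (le_csSup hTrbdd (Set.mem_image_of_mem _ hmem)) (not_le.2 hq)
    rcases mul_eq_zero.1 (h q) with h0 | h0
    · exact absurd h0 hqT
    · exact h0
  refine ⟨r, ?_⟩
  have hm : MeasurableSet {x : E | (x : WeakDual ℝ G) y = r} :=
    (meas_eval (E := E) y) (measurableSet_singleton r)
  rw [← prob_compl_eq_zero_iff hm]
  have hsub : {x : E | (x : WeakDual ℝ G) y = r}ᶜ ⊆
      {x : E | (x : WeakDual ℝ G) y < r} ∪ {x : E | r < (x : WeakDual ℝ G) y} := by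
    intro x hx
    exact (lt_or_gt_of_ne hx).imp id id
  exact measure_mono_null hsub (measure_union_null hlt hgt)

private lemma eq_dirac_of_halfspaces [TopologicalSpace.SeparableSpace G]
    (R : ℝ) (hEbdd : ∀ x ∈ E, ∀ y : G, |x y| ≤ R * ‖y‖)
    {s : Set G} (hsc : s.Countable) (hsd : Dense s)
    (μ : Measure E) [IsProbabilityMeasure μ]
    (h : ∀ y ∈ s, ∀ c : ℚ, μ {x : E | (x : WeakDual ℝ G) y ≤ (c : ℝ)} *
        μ {x : E | (c : ℝ) < (x : WeakDual ℝ G) y} = 0) :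
    ∃ x : E, μ = Measure.dirac x := by
  have H : ∀ y ∈ s, ∃ r : ℝ, μ {x : E | (x : WeakDual ℝ G) y = r} = 1 := fun y hy =>
    exists_level R hEbdd μ y (h y hy)
  choose! r hr using H
  set A : Set E := ⋂ y ∈ s, {x : E | (x : WeakDual ℝ G) y = r y} with hA
  have hm : ∀ y : G, MeasurableSet {x : E | (x : WeakDual ℝ G) y = r y} := fun y =>
    (meas_eval (E := E) y) (measurableSet_singleton (r y))
  have hAmeas : MeasurableSet A := MeasurableSet.biInter hsc fun y _ => hm y
  have hAfull : μ A = 1 := by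
    rw [← prob_compl_eq_zero_iff hAmeas, hA, Set.compl_iInter₂]
    refine (measure_biUnion_null_iff hsc).2 fun y hy => ?_
    rw [prob_compl_eq_zero_iff (hm y)]
    exact hr y hy
  have hAne : A.Nonempty := by
    rcases Set.eq_empty_or_nonempty A with he | hne
    · rw [he, measure_empty] at hAfull; exact absurd hAfull zero_ne_one
    · exact hne
  obtain ⟨x₀, hx₀⟩ := hAne
  have huniq : ∀ x ∈ A, x = x₀ := by
    intro x hx
    have heq : Set.EqOn (fun y => (x : WeakDual ℝ G) y) (fun y => (x₀ : WeakDual ℝ G) y) s := by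
      intro y hy
      have h1 := Set.mem_iInter₂.1 hx y hy
      have h2 := Set.mem_iInter₂.1 hx₀ y hy
      simp only [Set.mem_setOf_eq] at h1 h2
      simp [h1, h2]
    have := Continuous.ext_on hsd (map_continuous (x : WeakDual ℝ G))
      (map_continuous (x₀ : WeakDual ℝ G)) heq
    exact Subtype.ext (DFunLike.ext _ _ fun y => congrFun this y)
  have hsub : A ⊆ {x₀} := fun x hx => huniq x hx
  have hsing : MeasurableSet ({x₀} : Set E) := by
    have : ({x₀} : Set E) = Subtype.val ⁻¹' {(x₀ : WeakDual ℝ G)} := by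
      ext x; simp [Subtype.ext_iff]
    rw [this]
    exact measurable_subtype_coe isClosed_singleton.measurableSet
  have hfull : μ {x₀} = 1 :=
    le_antisymm prob_le_one (le_trans (le_of_eq hAfull.symm) (measure_mono hsub))
  refine ⟨x₀, Measure.ext fun S hS => ?_⟩
  rw [Measure.dirac_apply' _ hS]
  by_cases hmem : x₀ ∈ S
  · rw [Set.indicator_of_mem hmem]
    exact le_antisymm prob_le_one
      (le_trans (le_of_eq hfull.symm) (measure_mono (Set.singleton_subset_iff.2 hmem)))
  · rw [Set.indicator_of_notMem hmem]
    refine measure_mono_null (fun x hx => ?_) ((prob_compl_eq_zero_iff hsing).mpr hfull)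
    exact fun hx' => hmem (hx' ▸ hx)

end Aux

/-- Characterization of families of Dirac masses on a closed convex bounded subset
of the weak-star dual of a separable Banach space: `ν z` is a Dirac mass for
λ-a.e. `z` iff for every `y ∈ G` and `c ∈ ℝ`, for λ-a.e. `z` one of the two
half-spaces `{⟨x,y⟩ ≤ c}`, `{⟨x,y⟩ > c}` is `ν z`-negligible. -/
theorem stmt0
    {G : Type*} [NormedAddCommGroup G] [NormedSpace ℝ G]
    [TopologicalSpace.SeparableSpace G] [CompleteSpace G]
    [MeasurableSpace (WeakDual ℝ G)] [BorelSpace (WeakDual ℝ G)]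
    (E : Set (WeakDual ℝ G)) (hEclosed : IsClosed E) (hEconv : Convex ℝ E)
    (R : ℝ) (hEbdd : ∀ x ∈ E, ∀ y : G, |x y| ≤ R * ‖y‖)
    {F : Type*} [MeasurableSpace F] (lam : Measure F)
    (ν : F → Measure E) (hprob : ∀ z, IsProbabilityMeasure (ν z))
    (hBorelFam : ∀ A : Set E, MeasurableSet A → Measurable fun z => ν z A) :
    (∀ᵐ z ∂lam, ∃ x : E, ν z = Measure.dirac x) ↔
      (∀ (y : G) (c : ℝ), ∀ᵐ z ∂lam,
        ν z {x : E | (x : WeakDual ℝ G) y ≤ c} *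
          ν z {x : E | c < (x : WeakDual ℝ G) y} = 0) := by
  constructor
  · intro h y c
    filter_upwards [h] with z hz
    obtain ⟨x, hx⟩ := hz
    have h1 : MeasurableSet {x : E | (x : WeakDual ℝ G) y ≤ c} :=
      (meas_eval (E := E) y) measurableSet_Iic
    have h2 : MeasurableSet {x : E | c < (x : WeakDual ℝ G) y} :=
      (meas_eval (E := E) y) measurableSet_Ioi
    rw [hx, Measure.dirac_apply' _ h1, Measure.dirac_apply' _ h2]
    by_cases hc : (x : WeakDual ℝ G) y ≤ c
    · have hnot : x ∉ {x : E | c < (x : WeakDual ℝ G) y} := by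
        simp only [Set.mem_setOf_eq, not_lt]; exact hc
      rw [Set.indicator_of_notMem hnot, mul_zero]
    · have hnot : x ∉ {x : E | (x : WeakDual ℝ G) y ≤ c} := hc
      rw [Set.indicator_of_notMem hnot, zero_mul]
  · intro h
    obtain ⟨s, hsc, hsd⟩ := TopologicalSpace.exists_countable_dense G
    have h' : ∀ᵐ z ∂lam, ∀ y ∈ s, ∀ c : ℚ,
        ν z {x : E | (x : WeakDual ℝ G) y ≤ (c : ℝ)} *
          ν z {x : E | (c : ℝ) < (x : WeakDual ℝ G) y} = 0 :=
      (ae_ball_iff hsc).2 fun y _ => ae_all_iff.2 fun c => h y c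
    filter_upwards [h'] with z hz
    haveI := hprob z
    exact eq_dirac_of_halfspaces R hEbdd hsc hsd (ν z) hz
end

section
/- Let X, Y be Polish spaces with Y bounded metric, let f_n : X → Y and f : X → Y be Borel maps, ν_n, ν ∈ 𝒫(X), and suppose the measures (Id × f_n)_# ν_n converge weakly to (Id × f)_# ν in X × Y. Assume further there is a probability space (W, 𝓕, ℙ) and measurable maps i_n, i : W → X with ν_n = (i_n)_# ℙ, ν = i_# ℙ, and i_n → i ℙ-almost everywhere. Then f_n ∘ i_n converges to f ∘ i in ℙ-probability, i.e. for every ε > 0, ℙ({w : d_Y(f_n(i_n(w)), f(i(w))) > ε}) → 0 as n → ∞. -/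
open MeasureTheory Filter Metric Set
open scoped ENNReal Topology

/-!
By inner regularity, the limit law `(Id × f)_# ν` is carried, up to mass `δ`, by a compact subset
`C` of the graph of `f`. The first projection is injective on `C`, so by compactness `f` is uniformly
continuous along `C`: a point `r`-close to `C` whose first coordinate is `r`-close to that of a
point of `C` has second coordinate `ε`-close to it. By the portmanteau theorem the laws
`(Id × f_n)_# ν_n` eventually put mass less than `δ` outside the `r`-thickening of `C`, and
`i_n → i` in probability; outside these three small events, `d(f_n (i_n w), f (i w)) < ε`.
-/

section CompactGraph

variable {X Y : Type*} [MetricSpace X] [PseudoMetricSpace Y] {C : Set (X × Y)}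

lemma IsCompact.exists_pos_forall_dist_snd_lt_of_injOn_fst (hC : IsCompact C)
    (hinj : InjOn Prod.fst C) {ε : ℝ} (hε : 0 < ε) :
    ∃ η > 0, ∀ p ∈ C, ∀ q ∈ C, dist p.1 q.1 < η → dist p.2 q.2 < ε := by
  have hD : IsCompact ((C ×ˢ C) ∩ {z | ε ≤ dist z.1.2 z.2.2}) :=
    (hC.prod hC).inter_right (isClosed_le continuous_const (by fun_prop))
  obtain ⟨η, hη, hηD⟩ := hD.exists_forall_le' (f := fun z => dist z.1.1 z.2.1) (a := 0)
    (by fun_prop) <| by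
      rintro ⟨p, q⟩ ⟨⟨hp, hq⟩, hpq⟩
      refine dist_pos.2 fun h => ?_
      obtain rfl : p = q := hinj hp hq h
      simp only [mem_ofPred_eq, dist_self] at hpq
      linarith
  refine ⟨η, hη, fun p hp q hq hpq => ?_⟩
  by_contra! h
  exact (hηD (p, q) ⟨⟨hp, hq⟩, h⟩).not_gt hpq

lemma IsCompact.exists_pos_forall_thickening_dist_snd_lt_of_injOn_fst (hC : IsCompact C)
    (hinj : InjOn Prod.fst C) {ε : ℝ} (hε : 0 < ε) :
    ∃ r > 0, ∀ p ∈ thickening r C, ∀ q ∈ C, dist p.1 q.1 < r → dist p.2 q.2 < ε := by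
  obtain ⟨η, hη, hmod⟩ := hC.exists_pos_forall_dist_snd_lt_of_injOn_fst hinj (half_pos hε)
  refine ⟨min (η / 2) (ε / 2), by positivity, fun p hp q hq hpq => ?_⟩
  obtain ⟨p', hp', hpp'⟩ := mem_thickening_iff.1 hp
  rw [Prod.dist_eq, max_lt_iff] at hpp'
  have h₁ : dist p'.1 q.1 < η := calc
    dist p'.1 q.1 ≤ dist p.1 p'.1 + dist p.1 q.1 := dist_triangle_left _ _ _
    _ < η / 2 + η / 2 := by
      gcongr
      · exact hpp'.1.trans_le (min_le_left _ _)
      · exact hpq.trans_le (min_le_left _ _)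
    _ = η := add_halves η
  calc dist p.2 q.2 ≤ dist p.2 p'.2 + dist p'.2 q.2 := dist_triangle _ _ _
    _ < ε / 2 + ε / 2 := by
      gcongr
      · exact hpp'.2.trans_le (min_le_right _ _)
      · exact hmod p' hp' q hq h₁
    _ = ε := add_halves ε

end CompactGraph

lemma exists_isCompact_injOn_fst_map_graph_compl_lt {X Y : Type*}
    [TopologicalSpace X] [PolishSpace X] [MeasurableSpace X] [BorelSpace X]
    [TopologicalSpace Y] [PolishSpace Y] [MeasurableSpace Y] [BorelSpace Y]
    {g : X → Y} (hg : Measurable g) (ν : Measure X) [IsFiniteMeasure ν]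
    {δ : ℝ≥0∞} (hδ : δ ≠ 0) :
    ∃ C : Set (X × Y), IsCompact C ∧ InjOn Prod.fst C ∧
      ν.map (fun x => (x, g x)) Cᶜ < δ := by
  set S : Set (X × Y) := {p | p.2 = g p.1}
  have hS : MeasurableSet S := measurableSet_eq_fun measurable_snd (hg.comp measurable_fst)
  have hgraph : Measurable fun x => (x, g x) := measurable_id.prodMk hg
  have hSc : ν.map (fun x => (x, g x)) Sᶜ = 0 := by
    rw [Measure.map_apply hgraph hS.compl]
    simp [S]
  obtain ⟨C, hCS, hC, hSC⟩ := hS.exists_isCompact_sdiff_lt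
    (μ := ν.map fun x => (x, g x)) (measure_ne_top _ _) hδ
  refine ⟨C, hC, fun p hp q hq hpq => Prod.ext hpq ?_, ?_⟩
  · rw [hCS hp, hCS hq, hpq]
  · calc ν.map (fun x => (x, g x)) Cᶜ ≤ ν.map (fun x => (x, g x)) (S \ C ∪ Sᶜ) :=
          measure_mono fun p hp => by by_cases p ∈ S <;> simp_all
      _ ≤ ν.map (fun x => (x, g x)) (S \ C) + 0 := hSc ▸ measure_union_le _ _
      _ < δ := by rwa [add_zero]

theorem stmt1_general
    {X Y : Type*} [MetricSpace X] [PolishSpace X] [MeasurableSpace X] [BorelSpace X]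
    [MetricSpace Y] [PolishSpace Y] [MeasurableSpace Y] [BorelSpace Y]
    (f : ℕ → X → Y) (flim : X → Y)
    (hf : ∀ n, Measurable (f n)) (hflim : Measurable flim)
    (ν : ℕ → Measure X) (νlim : Measure X)
    (hνp : ∀ n, IsProbabilityMeasure (ν n)) (hνlimp : IsProbabilityMeasure νlim)
    {W : Type*} [MeasurableSpace W] (P : Measure W) [IsProbabilityMeasure P]
    (i : ℕ → W → X) (ilim : W → X)
    (hi : ∀ n, Measurable (i n)) (hilim : Measurable ilim)
    (hνi : ∀ n, ν n = P.map (i n)) (hνlim : νlim = P.map ilim)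
    (hae : ∀ᵐ w ∂P, Tendsto (fun n => i n w) atTop (nhds (ilim w)))
    (hweak : ∀ g : BoundedContinuousFunction (X × Y) ℝ,
      Tendsto (fun n => ∫ q, g q ∂((ν n).map (fun x => (x, f n x))))
        atTop (nhds (∫ q, g q ∂(νlim.map (fun x => (x, flim x)))))) :
    ∀ ε > (0 : ℝ),
      Tendsto (fun n => P {w | ε < dist (f n (i n w)) (flim (ilim w))}) atTop (nhds 0) := by
  intro ε hε
  have hgraph (n : ℕ) : Measurable fun x => (x, f n x) := measurable_id.prodMk (hf n)
  have hgraphlim : Measurable fun x => (x, flim x) := measurable_id.prodMk hflim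
  let μs (n : ℕ) : ProbabilityMeasure (X × Y) :=
    ⟨(ν n).map fun x => (x, f n x), Measure.isProbabilityMeasure_map (hgraph n).aemeasurable⟩
  let μ : ProbabilityMeasure (X × Y) :=
    ⟨νlim.map fun x => (x, flim x), Measure.isProbabilityMeasure_map hgraphlim.aemeasurable⟩
  have hμs : Tendsto μs atTop (𝓝 μ) := ProbabilityMeasure.tendsto_iff_forall_integral_tendsto.2 hweak
  refine ENNReal.tendsto_nhds_zero.2 fun δ hδ => ?_
  have hδ3 : 0 < δ / 3 := ENNReal.div_pos hδ.ne' ENNReal.ofNat_ne_top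
  obtain ⟨C, hC, hinj, hCδ⟩ := exists_isCompact_injOn_fst_map_graph_compl_lt hflim νlim hδ3.ne'
  obtain ⟨r, hr, hclose⟩ := hC.exists_pos_forall_thickening_dist_snd_lt_of_injOn_fst hinj hε
  have hfar : ∀ᶠ n in atTop, P {w | (i n w, f n (i n w)) ∉ thickening r C} < δ / 3 := by
    have hlimsup := (ProbabilityMeasure.limsup_measure_closed_le_of_tendsto hμs
      isOpen_thickening.isClosed_compl).trans_lt
        ((measure_mono (compl_subset_compl.2 (self_subset_thickening hr C))).trans_lt hCδ)
    filter_upwards [eventually_lt_of_limsup_lt hlimsup] with n hn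
    rwa [ProbabilityMeasure.coe_mk, Measure.map_apply (hgraph n) isOpen_thickening.measurableSet.compl, hνi,
      Measure.map_apply (hi n) ((hgraph n) isOpen_thickening.measurableSet.compl)] at hn
  have hoff : P {w | (ilim w, flim (ilim w)) ∉ C} < δ / 3 := by
    rwa [hνlim, Measure.map_map hgraphlim hilim,
      Measure.map_apply (hgraphlim.comp hilim) hC.isClosed.measurableSet.compl] at hCδ
  have hsep : ∀ᶠ n in atTop, P {w | r ≤ dist (i n w) (ilim w)} ≤ δ / 3 :=
    (tendstoInMeasure_iff_dist.1 (tendstoInMeasure_of_tendsto_ae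
      (fun n => (hi n).aestronglyMeasurable) hae) r hr).eventually
        (eventually_le_nhds hδ3)
  filter_upwards [hfar, hsep] with n hfar_n hsep_n
  calc P {w | ε < dist (f n (i n w)) (flim (ilim w))}
      ≤ P ({w | (i n w, f n (i n w)) ∉ thickening r C} ∪ {w | (ilim w, flim (ilim w)) ∉ C} ∪
          {w | r ≤ dist (i n w) (ilim w)}) := by
        refine measure_mono fun w hw => ?_
        by_contra! hgood
        simp only [mem_union, mem_ofPred_eq, not_or, not_not, not_le] at hgood
        exact (hclose _ hgood.1.1 _ hgood.1.2 hgood.2).not_gt hw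
    _ ≤ δ / 3 + δ / 3 + δ / 3 := by
        grw [measure_union_le, measure_union_le, hfar_n.le, hoff.le, hsep_n]
    _ = δ := ENNReal.add_thirds δ

/-- Convergence in probability from weak convergence of measures on graphs,
together with a common Skorokhod representation. -/
theorem stmt1
    {X Y : Type*} [MetricSpace X] [PolishSpace X] [MeasurableSpace X] [BorelSpace X]
    [MetricSpace Y] [PolishSpace Y] [MeasurableSpace Y] [BorelSpace Y]
    (hYbdd : ∀ a b : Y, dist a b ≤ 1)
    (f : ℕ → X → Y) (flim : X → Y)
    (hf : ∀ n, Measurable (f n)) (hflim : Measurable flim)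
    (ν : ℕ → Measure X) (νlim : Measure X)
    (hνp : ∀ n, IsProbabilityMeasure (ν n)) (hνlimp : IsProbabilityMeasure νlim)
    {W : Type*} [MeasurableSpace W] (P : Measure W) [IsProbabilityMeasure P]
    (i : ℕ → W → X) (ilim : W → X)
    (hi : ∀ n, Measurable (i n)) (hilim : Measurable ilim)
    (hνi : ∀ n, ν n = P.map (i n)) (hνlim : νlim = P.map ilim)
    (hae : ∀ᵐ w ∂P, Tendsto (fun n => i n w) atTop (nhds (ilim w)))
    (hweak : ∀ g : BoundedContinuousFunction (X × Y) ℝ,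
      Tendsto (fun n => ∫ q, g q ∂((ν n).map (fun x => (x, f n x))))
        atTop (nhds (∫ q, g q ∂(νlim.map (fun x => (x, flim x)))))) :
    ∀ ε > (0 : ℝ),
      Tendsto (fun n => P {w | ε < dist (f n (i n w)) (flim (ilim w))}) atTop (nhds 0) :=
  stmt1_general f flim hf hflim ν νlim hνp hνlimp P i ilim hi hilim hνi hνlim hae hweak
end

section
/- Let U = U_s + U_b on ℝⁿ where U_b is globally bounded and Lipschitz, U_s is locally Lipschitz outside a closed Lebesgue-negligible set S ⊂ ℝⁿ, U(x) → +∞ as x → S, and ess sup_{U(x) ≤ M} |∇U(x)|/(1+|x|) < ∞ for every M ≥ 0. Let b(x,p) = (p, -∇U(x)) on ℝ^{2n} and let E(x,p) = |p|²/2 + U(x). Then for every smooth compactly supported φ : ℝ → ℝ, the composition φ ∘ E is uniformly bounded and locally Lipschitz on ℝ^{2n}, and ⟨∇(φ∘E)(z), b(z)⟩ = 0 for Lebesgue-a.e. z ∈ ℝ^{2n}. -/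
open MeasureTheory Set

/-- For `U = U_s + U_b` with `U_b` bounded and Lipschitz, `U_s` locally Lipschitz outside
a closed negligible set `S`, `U → +∞` near `S`, and `ess sup_{U ≤ M} |∇U|/(1+|x|) < ∞`,
the composition `φ ∘ E` (with `E(x,p) = |p|²/2 + U(x)` and `φ` smooth compactly supported)
is uniformly bounded and locally Lipschitz, and its derivative in the direction of
`b(x,p) = (p, -∇U(x))` vanishes a.e. -/
theorem stmt3 (n : ℕ)
    (S : Set (EuclideanSpace ℝ (Fin n))) (hSclosed : IsClosed S) (hSnull : volume S = 0)
    (Us Ub : EuclideanSpace ℝ (Fin n) → ℝ)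
    (hUb_bdd : ∃ K, ∀ x, |Ub x| ≤ K) (hUb_lip : ∃ L : NNReal, LipschitzWith L Ub)
    (hUs_loclip : ∀ x ∉ S, ∃ ε > (0 : ℝ), ∃ K : NNReal,
      LipschitzOnWith K Us (Metric.ball x ε))
    (U : EuclideanSpace ℝ (Fin n) → ℝ) (hU : U = fun x => Us x + Ub x)
    (hblow : ∀ M : ℝ, ∀ x₀ ∈ S, ∀ᶠ x in nhds x₀, M ≤ U x)
    (hgrow : ∀ M : ℝ, 0 ≤ M → ∃ C : ℝ, ∀ᵐ x ∂(volume : Measure (EuclideanSpace ℝ (Fin n))),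
      U x ≤ M → ‖fderiv ℝ U x‖ ≤ C * (1 + ‖x‖))
    (φ : ℝ → ℝ) (hφ : ContDiff ℝ (⊤ : ℕ∞) φ) (hφsupp : HasCompactSupport φ) :
    (∃ K, ∀ z : EuclideanSpace ℝ (Fin n) × EuclideanSpace ℝ (Fin n),
        |φ (‖z.2‖ ^ 2 / 2 + U z.1)| ≤ K) ∧
    LocallyLipschitz (fun z : EuclideanSpace ℝ (Fin n) × EuclideanSpace ℝ (Fin n) =>
        φ (‖z.2‖ ^ 2 / 2 + U z.1)) ∧
    (∀ᵐ z ∂(volume : Measure (EuclideanSpace ℝ (Fin n) × EuclideanSpace ℝ (Fin n))),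
      DifferentiableAt ℝ U z.1 →
      DifferentiableAt ℝ (fun w : EuclideanSpace ℝ (Fin n) × EuclideanSpace ℝ (Fin n) =>
        φ (‖w.2‖ ^ 2 / 2 + U w.1)) z →
      fderiv ℝ (fun w : EuclideanSpace ℝ (Fin n) × EuclideanSpace ℝ (Fin n) =>
          φ (‖w.2‖ ^ 2 / 2 + U w.1)) z
        (z.2, -((InnerProductSpace.toDual ℝ (EuclideanSpace ℝ (Fin n))).symm
          (fderiv ℝ U z.1))) = 0) := by
  obtain ⟨L, hL⟩ := hUb_lip
  obtain ⟨Lφ, hLφ⟩ := ContDiff.lipschitzWith_of_hasCompactSupport hφsupp hφ (by simp)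
  -- bound on the support of φ
  obtain ⟨R, hR⟩ := (hφsupp.isBounded).subset_ball (0 : ℝ)
  have hφzero : ∀ t : ℝ, R ≤ t → φ t = 0 := by
    intro t ht
    by_contra h
    have : t ∈ Metric.ball (0 : ℝ) R := hR (subset_tsupport φ h)
    rw [Metric.mem_ball, Real.dist_eq, sub_zero] at this
    have := le_abs_self t
    linarith
  refine ⟨?_, ?_, ?_⟩
  · -- boundedness
    obtain ⟨C, hC⟩ := hφsupp.exists_bound_of_continuous (hφ.continuous)
    exact ⟨C, fun z => by simpa [Real.norm_eq_abs] using hC (‖z.2‖ ^ 2 / 2 + U z.1)⟩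
  · -- locally Lipschitz
    intro z
    by_cases hz : z.1 ∈ S
    · -- near S the function is eventually zero
      obtain ⟨s, hs, hsU⟩ := (hblow (max R 0 + 1) z.1 hz).exists_mem
      refine ⟨0, s ×ˢ Set.univ, prod_mem_nhds hs Filter.univ_mem, ?_⟩
      apply LipschitzOnWith.of_dist_le_mul
      intro a ha b hb
      have hUa : max R 0 + 1 ≤ U a.1 := hsU a.1 ha.1
      have hUb' : max R 0 + 1 ≤ U b.1 := hsU b.1 hb.1
      have h1 : φ (‖a.2‖ ^ 2 / 2 + U a.1) = 0 := by
        apply hφzero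
        have h0 : (0:ℝ) ≤ ‖a.2‖ ^ 2 / 2 := by positivity
        have := le_max_left R 0
        linarith
      have h2 : φ (‖b.2‖ ^ 2 / 2 + U b.1) = 0 := by
        apply hφzero
        have h0 : (0:ℝ) ≤ ‖b.2‖ ^ 2 / 2 := by positivity
        have := le_max_left R 0
        linarith
      simp [h1, h2]
    · -- away from S
      obtain ⟨ε, hε, K, hK⟩ := hUs_loclip z.1 hz
      set Kp : NNReal := K + L + (‖z.2‖ + 1).toNNReal with hKp
      refine ⟨Lφ * Kp, Metric.ball z.1 ε ×ˢ Metric.ball z.2 1,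
        prod_mem_nhds (Metric.ball_mem_nhds _ hε) (Metric.ball_mem_nhds _ one_pos), ?_⟩
      apply (hLφ.comp_lipschitzOnWith ·)
      apply LipschitzOnWith.of_dist_le_mul
      rintro a ⟨ha1, ha2⟩ b ⟨hb1, hb2⟩
      have hd1 : dist a.1 b.1 ≤ dist a b := le_max_left _ _
      have hd2 : dist a.2 b.2 ≤ dist a b := le_max_right _ _
      have hna : ‖a.2‖ ≤ ‖z.2‖ + 1 := by
        have := mem_ball_iff_norm.mp ha2
        have h := norm_sub_norm_le a.2 z.2
        rw [← dist_eq_norm] at h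
        rw [Metric.mem_ball] at ha2
        linarith
      have hnb : ‖b.2‖ ≤ ‖z.2‖ + 1 := by
        have h := norm_sub_norm_le b.2 z.2
        rw [← dist_eq_norm] at h
        rw [Metric.mem_ball] at hb2
        linarith
      have hsq : |‖a.2‖ ^ 2 / 2 - ‖b.2‖ ^ 2 / 2| ≤ (‖z.2‖ + 1) * dist a.2 b.2 := by
        have h1 : ‖a.2‖ ^ 2 / 2 - ‖b.2‖ ^ 2 / 2 = (‖a.2‖ - ‖b.2‖) * ((‖a.2‖ + ‖b.2‖) / 2) := by
          ring
        rw [h1, abs_mul]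
        have h2 : |‖a.2‖ - ‖b.2‖| ≤ dist a.2 b.2 := abs_norm_sub_norm_le a.2 b.2
        have h3 : |(‖a.2‖ + ‖b.2‖) / 2| ≤ ‖z.2‖ + 1 := by
          rw [abs_of_nonneg (by positivity)]
          linarith
        calc |‖a.2‖ - ‖b.2‖| * |(‖a.2‖ + ‖b.2‖) / 2|
            ≤ dist a.2 b.2 * (‖z.2‖ + 1) :=
              mul_le_mul h2 h3 (abs_nonneg _) dist_nonneg
          _ = (‖z.2‖ + 1) * dist a.2 b.2 := by ring
      have hUs' : |Us a.1 - Us b.1| ≤ (K : ℝ) * dist a.1 b.1 := by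
        have := hK.dist_le_mul a.1 ha1 b.1 hb1
        rwa [Real.dist_eq] at this
      have hUb' : |Ub a.1 - Ub b.1| ≤ (L : ℝ) * dist a.1 b.1 := by
        have := hL.dist_le_mul a.1 b.1
        rwa [Real.dist_eq] at this
      have hKpv : (Kp : ℝ) = (K : ℝ) + (L : ℝ) + (‖z.2‖ + 1) := by
        rw [hKp]
        push_cast
        rw [Real.coe_toNNReal _ (by positivity)]
      rw [Real.dist_eq, hU]
      have expand : ‖a.2‖ ^ 2 / 2 + (Us a.1 + Ub a.1) - (‖b.2‖ ^ 2 / 2 + (Us b.1 + Ub b.1))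
          = (‖a.2‖ ^ 2 / 2 - ‖b.2‖ ^ 2 / 2) + (Us a.1 - Us b.1) + (Ub a.1 - Ub b.1) := by ring
      rw [expand, hKpv]
      have htri : |(‖a.2‖ ^ 2 / 2 - ‖b.2‖ ^ 2 / 2) + (Us a.1 - Us b.1) + (Ub a.1 - Ub b.1)|
          ≤ |‖a.2‖ ^ 2 / 2 - ‖b.2‖ ^ 2 / 2| + |Us a.1 - Us b.1| + |Ub a.1 - Ub b.1| :=
        (abs_add_le _ _).trans (by gcongr; exact abs_add_le _ _)
      have hKnn : (0:ℝ) ≤ K := K.coe_nonneg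
      have hLnn : (0:ℝ) ≤ L := L.coe_nonneg
      have hzn : (0:ℝ) ≤ ‖z.2‖ + 1 := by positivity
      calc |(‖a.2‖ ^ 2 / 2 - ‖b.2‖ ^ 2 / 2) + (Us a.1 - Us b.1) + (Ub a.1 - Ub b.1)|
          ≤ (‖z.2‖ + 1) * dist a.2 b.2 + (K : ℝ) * dist a.1 b.1 + (L : ℝ) * dist a.1 b.1 := by
            refine htri.trans ?_
            gcongr
        _ ≤ (‖z.2‖ + 1) * dist a b + (K : ℝ) * dist a b + (L : ℝ) * dist a b := by gcongr
        _ = ((K : ℝ) + (L : ℝ) + (‖z.2‖ + 1)) * dist a b := by ring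
  · -- the a.e. statement, in fact pointwise
    refine Filter.Eventually.of_forall ?_
    rintro z hdU -
    set f := fderiv ℝ U z.1 with hf
    have hsq : HasFDerivAt (fun w : EuclideanSpace ℝ (Fin n) × EuclideanSpace ℝ (Fin n) =>
        ‖w.2‖ ^ 2) (2 • ((innerSL ℝ z.2).comp
          (ContinuousLinearMap.snd ℝ (EuclideanSpace ℝ (Fin n)) (EuclideanSpace ℝ (Fin n))))) z :=
      (hasFDerivAt_snd (𝕜 := ℝ)).norm_sq
    have hsq2 : HasFDerivAt (fun w : EuclideanSpace ℝ (Fin n) × EuclideanSpace ℝ (Fin n) =>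
        ‖w.2‖ ^ 2 / 2) ((2⁻¹ : ℝ) • (2 • ((innerSL ℝ z.2).comp
          (ContinuousLinearMap.snd ℝ (EuclideanSpace ℝ (Fin n)) (EuclideanSpace ℝ (Fin n)))))) z := by
      simpa [div_eq_inv_mul, Pi.smul_def, smul_eq_mul] using hsq.const_smul (2⁻¹ : ℝ)
    have hU1 : HasFDerivAt (fun w : EuclideanSpace ℝ (Fin n) × EuclideanSpace ℝ (Fin n) =>
        U w.1) (f.comp (ContinuousLinearMap.fst ℝ (EuclideanSpace ℝ (Fin n))
          (EuclideanSpace ℝ (Fin n)))) z :=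
      hdU.hasFDerivAt.comp z (hasFDerivAt_fst (𝕜 := ℝ))
    have hg : HasFDerivAt (fun w : EuclideanSpace ℝ (Fin n) × EuclideanSpace ℝ (Fin n) =>
        ‖w.2‖ ^ 2 / 2 + U w.1)
        ((2⁻¹ : ℝ) • (2 • ((innerSL ℝ z.2).comp
          (ContinuousLinearMap.snd ℝ (EuclideanSpace ℝ (Fin n)) (EuclideanSpace ℝ (Fin n))))) +
          f.comp (ContinuousLinearMap.fst ℝ (EuclideanSpace ℝ (Fin n))
            (EuclideanSpace ℝ (Fin n)))) z := hsq2.add hU1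
    have hφd : HasDerivAt φ (deriv φ (‖z.2‖ ^ 2 / 2 + U z.1)) (‖z.2‖ ^ 2 / 2 + U z.1) :=
      (hφ.differentiable (by simp) _).hasDerivAt
    have hcomp := hφd.comp_hasFDerivAt z hg
    rw [show (fun w : EuclideanSpace ℝ (Fin n) × EuclideanSpace ℝ (Fin n) =>
        φ (‖w.2‖ ^ 2 / 2 + U w.1)) = φ ∘ (fun w : EuclideanSpace ℝ (Fin n) × EuclideanSpace ℝ (Fin n) =>
        ‖w.2‖ ^ 2 / 2 + U w.1) from rfl, hcomp.fderiv]
    have hval : ((2⁻¹ : ℝ) • (2 • ((innerSL ℝ z.2).comp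
          (ContinuousLinearMap.snd ℝ (EuclideanSpace ℝ (Fin n)) (EuclideanSpace ℝ (Fin n))))) +
          f.comp (ContinuousLinearMap.fst ℝ (EuclideanSpace ℝ (Fin n))
            (EuclideanSpace ℝ (Fin n))))
          (z.2, -((InnerProductSpace.toDual ℝ (EuclideanSpace ℝ (Fin n))).symm f)) = 0 := by
      simp only [ContinuousLinearMap.add_apply, ContinuousLinearMap.smul_apply,
        ContinuousLinearMap.comp_apply, ContinuousLinearMap.coe_snd',
        ContinuousLinearMap.coe_fst', innerSL_apply_apply, smul_eq_mul]
      have h1 : (inner ℝ z.2 (-((InnerProductSpace.toDual ℝ (EuclideanSpace ℝ (Fin n))).symm f)) : ℝ)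
          = -(f z.2) := by
        rw [inner_neg_right, real_inner_comm, InnerProductSpace.toDual_symm_apply]
      rw [h1]
      ring_nf
    simp only [ContinuousLinearMap.smul_apply, hval, smul_zero]
end
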